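/- Let B_1, …, B_Q be dependences B_i(x) = A_i x + b_i from the tiled source space, assume t = d, T(τ) is nonempty, and each A_i(𝐧_j) has integer coordinates. Let FP(τ) = ⋃_{l} B_l⟨T(τ)⟩, V_i(τ) = {τ' ∈ ℤ^d : B_i⟨T(τ')⟩ ∩ FP(τ) ≠ ∅}, W_i(δ) = the orthogonal projection of Σ_j δ_j·𝐧_j onto the orthogonal complement of ker A_i, and for D ⊆ {1,…,Q} let F_D(τ) = (⋂_{i ∈ D} V_i(τ)) \ (⋃_{i ∉ D} V_i(τ)). Then for every D ⊆ {1, …, Q}, the set P_D(τ) = {W_i(τ' − τ) : τ' ∈ F_D(τ), i ∈ D} is finite. -/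

import Mathlib

open RealInnerProductSpace

/-!
The vectors `∑ j, δ j • 𝐧 j` translate tile `τ` onto tile `τ + δ`. So if the image of tile `τ'`
under `B i` meets the footprint `FP τ`, then `A i (∑ j, (τ' - τ) j • 𝐧 j)` is the difference of a
point of `FP τ` and a point of `B i⟨T(τ)⟩`; both sets are bounded because tiles are. By the
integrality assumption this vector is also an integer point of `ℝ^k`, so only finitely many values
occur. Finally, the projection onto `(ker A i)ᗮ` of a vector is determined by its image under
`A i`, since `A i` is injective on `(ker A i)ᗮ`.
-/

open Bornology Pointwise Set

theorem Module.Basis.isBounded_setOf_forall_inner_mem {ι E : Type*} [Fintype ι]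
    [NormedAddCommGroup E] [InnerProductSpace ℝ E] (b : Module.Basis ι ℝ E)
    {S : ι → Set ℝ} (hS : ∀ j, IsBounded (S j)) : IsBounded {x : E | ∀ j, ⟪x, b j⟫ ∈ S j} := by
  have := b.finiteDimensional_of_finite
  let L : E →ₗ[ℝ] ι → ℝ := LinearMap.pi fun j => innerₛₗ ℝ (b j)
  obtain ⟨K, -, hK⟩ := L.exists_antilipschitzWith <| LinearMap.ker_eq_bot'.2 fun x hx =>
    InnerProductSpace.ext_inner_left_basis b fun j => by simpa [L] using congr_fun hx j
  refine (hK.isBounded_preimage (IsBounded.pi hS)).subset fun x hx j _ => ?_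
  simpa [L, real_inner_comm] using hx j

theorem LinearMap.finite_image_orthogonalProjectionOnto_orthogonal_ker {𝕜 E F : Type*} [RCLike 𝕜]
    [NormedAddCommGroup E] [InnerProductSpace 𝕜 E] [FiniteDimensional 𝕜 E]
    [AddCommGroup F] [Module 𝕜 F] (f : E →ₗ[𝕜] F) {X : Set E} (hX : (f '' X).Finite) :
    ((fun v => ((ker f)ᗮ.orthogonalProjectionOnto v : E)) '' X).Finite := by
  have hfP : ∀ v, f ((ker f)ᗮ.orthogonalProjectionOnto v) = f v := fun v => by
    have := (ker f)ᗮ.sub_starProjection_mem_orthogonal v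
    rw [Submodule.orthogonal_orthogonal, mem_ker, map_sub, sub_eq_zero] at this
    exact this.symm
  have hinj : InjOn f ((ker f)ᗮ : Set E) := fun u hu w hw huw => by
    have : u - w ∈ ker f ⊓ (ker f)ᗮ :=
      Submodule.mem_inf.2 ⟨by rw [mem_ker, map_sub, huw, sub_self], Submodule.sub_mem _ hu hw⟩
    rwa [Submodule.inf_orthogonal_eq_bot, Submodule.mem_bot, sub_eq_zero] at this
  refine Set.Finite.of_finite_image ?_
    (hinj.mono (image_subset_iff.2 fun v _ => Submodule.coe_mem _))
  rwa [image_image, funext hfP]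

theorem isBounded_image_linearMap_add_const {E F : Type*} [NormedAddCommGroup E] [NormedSpace ℝ E]
    [FiniteDimensional ℝ E] [NormedAddCommGroup F] [NormedSpace ℝ F] (f : E →ₗ[ℝ] F) (c : F)
    {S : Set E} (hS : IsBounded S) : IsBounded ((fun x => f x + c) '' S) :=
  (f.toContinuousLinearMap.lipschitz.add (LipschitzWith.const c)).isBounded_image hS

theorem LinearMap.map_sum_intCast_smul_mem {ι E F : Type*} [Fintype ι] [AddCommGroup E]
    [Module ℝ E] [AddCommGroup F] [Module ℝ F] (f : E →ₗ[ℝ] F) {L : Submodule ℤ F} {N : ι → E}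
    (hN : ∀ j, f (N j) ∈ L) (δ : ι → ℤ) : f (∑ j, (δ j : ℝ) • N j) ∈ L := by
  simp only [map_sum, Int.cast_smul_eq_zsmul, map_zsmul]
  exact Submodule.sum_mem _ fun j _ => Submodule.smul_mem _ _ (hN j)

theorem EuclideanSpace.mem_span_int_basisFun_iff {ι : Type*} [Fintype ι] {z : EuclideanSpace ℝ ι} :
    z ∈ Submodule.span ℤ (range (EuclideanSpace.basisFun ι ℝ).toBasis) ↔
      ∀ l, ∃ m : ℤ, z l = m := by
  rw [Module.Basis.mem_span_iff_repr_mem]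
  simp [eq_comm]

section Tile

variable {ι E : Type*} [Fintype ι] [NormedAddCommGroup E] [InnerProductSpace ℝ E]

def tile (n : ι → E) (s : ι → ℝ) (σ : ι → ℤ) : Set E :=
  {x | ∀ j, s j * (σ j : ℝ) ≤ ⟪x, n j⟫ ∧ ⟪x, n j⟫ < s j * ((σ j : ℝ) + 1)}

theorem isBounded_tile [FiniteDimensional ℝ E] {n : ι → E} (hn : LinearIndependent ℝ n)
    (hcard : Fintype.card ι = Module.finrank ℝ E) (s : ι → ℝ) (σ : ι → ℤ) :
    IsBounded (tile n s σ) := by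
  let b := Module.Basis.mk hn (hn.span_eq_top_of_card_eq_finrank' hcard).ge
  simpa [b, tile] using b.isBounded_setOf_forall_inner_mem
    (S := fun j => Ico (s j * σ j) (s j * (σ j + 1))) fun _ => Metric.isBounded_Ico _ _

variable [DecidableEq ι] {n N : ι → E} {s : ι → ℝ}

theorem inner_sum_smul_eq_of_inner_eq_ite (hN : ∀ i j, ⟪N i, n j⟫ = if i = j then s j else 0)
    (c : ι → ℝ) (m : ι) : ⟪∑ j, c j • N j, n m⟫ = c m * s m := by
  simp [sum_inner, real_inner_smul_left, hN]

theorem sub_sum_smul_mem_tile (hN : ∀ i j, ⟪N i, n j⟫ = if i = j then s j else 0)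
    {σ δ : ι → ℤ} {x : E} (hx : x ∈ tile n s σ) :
    x - ∑ j, (δ j : ℝ) • N j ∈ tile n s (σ - δ) := by
  intro m
  rw [inner_sub_left, inner_sum_smul_eq_of_inner_eq_ite hN]
  obtain ⟨h₁, h₂⟩ := hx m
  rw [Pi.sub_apply, Int.cast_sub]
  constructor <;> linarith

theorem map_sum_smul_mem_sub_image_tile {F : Type*} [AddCommGroup F] [Module ℝ F]
    (hN : ∀ i j, ⟪N i, n j⟫ = if i = j then s j else 0) (f : E →ₗ[ℝ] F) (c : F)
    {σ τ : ι → ℤ} {S : Set F} (h : ((fun x => f x + c) '' tile n s σ ∩ S).Nonempty) :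
    f (∑ j, ((σ - τ) j : ℝ) • N j) ∈ S - (fun x => f x + c) '' tile n s τ := by
  obtain ⟨_, ⟨x, hx, rfl⟩, hS⟩ := h
  have hx' := sub_sum_smul_mem_tile hN (δ := σ - τ) hx
  rw [sub_sub_cancel] at hx'
  refine ⟨_, hS, _, ⟨_, hx', rfl⟩, ?_⟩
  simp only [map_sub]
  abel

end Tile

theorem projected_offsets_finite_per_family_general
    (d k Q : ℕ)
    (n : Fin d → EuclideanSpace ℝ (Fin d)) (hn : LinearIndependent ℝ n)
    (s : Fin d → ℝ)
    (N : Fin d → EuclideanSpace ℝ (Fin d))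
    (hN : ∀ i j, ⟪N i, n j⟫ = if i = j then s j else 0)
    (A : Fin Q → (EuclideanSpace ℝ (Fin d) →ₗ[ℝ] EuclideanSpace ℝ (Fin k)))
    (b : Fin Q → EuclideanSpace ℝ (Fin k))
    (T : (Fin d → ℤ) → Set (EuclideanSpace ℝ (Fin d)))
    (hT : ∀ τ, T τ = {x | ∀ j, s j * (τ j : ℝ) ≤ ⟪x, n j⟫ ∧ ⟪x, n j⟫ < s j * ((τ j : ℝ) + 1)})
    (τ : Fin d → ℤ)
    (hint : ∀ i j l, ∃ z : ℤ, A i (N j) l = (z : ℝ))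
    (FP : (Fin d → ℤ) → Set (EuclideanSpace ℝ (Fin k)))
    (hFP : ∀ σ, FP σ = ⋃ l : Fin Q, (fun x => A l x + b l) '' T σ)
    (V : Fin Q → Set (Fin d → ℤ))
    (hV : ∀ i, V i = {τ' | ((fun x => A i x + b i) '' T τ' ∩ FP τ).Nonempty})
    (W : Fin Q → (Fin d → ℤ) → EuclideanSpace ℝ (Fin d))
    (hW : ∀ i δ, W i δ =
      (Submodule.orthogonalProjectionOnto (LinearMap.ker (A i))ᗮ (∑ j, (δ j : ℝ) • N j) :
        EuclideanSpace ℝ (Fin d)))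
    (F : Set (Fin Q) → Set (Fin d → ℤ))
    (hF : ∀ D, F D = (⋂ i ∈ D, V i) \ (⋃ i ∈ Dᶜ, V i)) :
    ∀ D : Set (Fin Q),
      {w : EuclideanSpace ℝ (Fin d) |
        ∃ τ' ∈ F D, ∃ i ∈ D, w = W i (τ' - τ)}.Finite := by
  intro D
  obtain rfl : T = tile n s := funext hT
  have hB : ∀ l, IsBounded ((fun x => A l x + b l) '' tile n s τ) := fun l =>
    isBounded_image_linearMap_add_const (A l) (b l) (isBounded_tile hn (by simp) s τ)
  have hFPb : IsBounded (FP τ) := hFP τ ▸ isBounded_iUnion.2 hB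
  have hfin : ∀ i, ((fun τ' => W i (τ' - τ)) '' V i).Finite := fun i => by
    have hoffsets : (A i '' ((fun τ' => ∑ j, ((τ' - τ) j : ℝ) • N j) '' V i)).Finite := by
      refine (ZSpan.setFinite_inter (EuclideanSpace.basisFun (Fin k) ℝ).toBasis
        (isBounded_sub hFPb (hB i))).subset ?_
      rintro _ ⟨_, ⟨τ', hτ', rfl⟩, rfl⟩
      exact ⟨map_sum_smul_mem_sub_image_tile hN (A i) (b i) (by rwa [hV i] at hτ'),
        (A i).map_sum_intCast_smul_mem
          (fun j => EuclideanSpace.mem_span_int_basisFun_iff.2 (hint i j)) _⟩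
    simpa only [hW, image_image] using
      (A i).finite_image_orthogonalProjectionOnto_orthogonal_ker hoffsets
  refine (finite_iUnion hfin).subset ?_
  rintro _ ⟨τ', hτ', i, hi, rfl⟩
  rw [hF] at hτ'
  exact mem_iUnion.2 ⟨i, τ', mem_iInter₂.1 hτ'.1 i hi, rfl⟩

/-- with `t = d`, a nonempty tile, integer coordinates for each
`A i (𝐧 j)`, `FP τ` the combined footprint, `V i τ` the consumer tiles of dependence
`i`, `W i δ` the projection of `∑ j, δ j • 𝐧 j` onto `(ker (A i))ᗮ`, and
`F D = (⋂ i ∈ D, V i) \ (⋃ i ∉ D, V i)`, each set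
`P_D(τ) = {W i (τ' − τ) : τ' ∈ F D, i ∈ D}` is finite. -/
theorem projected_offsets_finite_per_family
    (d k Q : ℕ)
    (n : Fin d → EuclideanSpace ℝ (Fin d)) (hn : LinearIndependent ℝ n)
    (s : Fin d → ℝ) (hs : ∀ j, 0 < s j)
    (N : Fin d → EuclideanSpace ℝ (Fin d))
    (hN : ∀ i j, ⟪N i, n j⟫ = if i = j then s j else 0)
    (A : Fin Q → (EuclideanSpace ℝ (Fin d) →ₗ[ℝ] EuclideanSpace ℝ (Fin k)))
    (b : Fin Q → EuclideanSpace ℝ (Fin k))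
    (T : (Fin d → ℤ) → Set (EuclideanSpace ℝ (Fin d)))
    (hT : ∀ τ, T τ = {x | ∀ j, s j * (τ j : ℝ) ≤ ⟪x, n j⟫ ∧ ⟪x, n j⟫ < s j * ((τ j : ℝ) + 1)})
    (τ : Fin d → ℤ) (hτ : (T τ).Nonempty)
    (hint : ∀ i j l, ∃ z : ℤ, A i (N j) l = (z : ℝ))
    (FP : (Fin d → ℤ) → Set (EuclideanSpace ℝ (Fin k)))
    (hFP : ∀ σ, FP σ = ⋃ l : Fin Q, (fun x => A l x + b l) '' T σ)
    (V : Fin Q → Set (Fin d → ℤ))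
    (hV : ∀ i, V i = {τ' | ((fun x => A i x + b i) '' T τ' ∩ FP τ).Nonempty})
    (W : Fin Q → (Fin d → ℤ) → EuclideanSpace ℝ (Fin d))
    (hW : ∀ i δ, W i δ =
      (Submodule.orthogonalProjectionOnto (LinearMap.ker (A i))ᗮ (∑ j, (δ j : ℝ) • N j) :
        EuclideanSpace ℝ (Fin d)))
    (F : Set (Fin Q) → Set (Fin d → ℤ))
    (hF : ∀ D, F D = (⋂ i ∈ D, V i) \ (⋃ i ∈ Dᶜ, V i)) :
    ∀ D : Set (Fin Q),
      {w : EuclideanSpace ℝ (Fin d) |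
        ∃ τ' ∈ F D, ∃ i ∈ D, w = W i (τ' - τ)}.Finite :=
  projected_offsets_finite_per_family_general d k Q n hn s N hN A b T hT τ hint FP hFP V hV W hW F
    hF
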